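/- arXiv:2412.18452 — 3 statements merged into one kernel-verified Lean document; each statement's English description precedes it below -/
import Mathlib

section
/- Define χ(k, n) recursively by χ(0, n) = 1, χ(n, n) = 1, and χ(k, n) = χ(k-1, n-1) + (-1)^k χ(k, n-1) for 0 < k < n. Then χ(k, n) = 0 if n is even and k is odd, and χ(k, n) = binomial(⌊n/2⌋, ⌊k/2⌋) otherwise. -/
theorem stmt_8 (f : ℕ → ℕ → ℤ)
    (h0 : ∀ n, f 0 n = 1) (hd : ∀ n, f n n = 1)
    (hrec : ∀ k n, 0 < k → k < n → f k n = f (k - 1) (n - 1) + (-1) ^ k * f k (n - 1)) :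
    ∀ k n, k ≤ n →
      f k n = if Even n ∧ Odd k then 0 else ((n / 2).choose (k / 2) : ℤ) := by
  intro k n
  induction n generalizing k with
  | zero =>
    intro hk
    interval_cases k
    simp [h0]
  | succ n ih =>
    intro hk
    rcases Nat.eq_zero_or_pos k with rfl | hk0
    · rw [h0, if_neg (by rintro ⟨_, h⟩; exact (Nat.not_odd_zero h)), Nat.choose_zero_right]
      norm_num
    rcases eq_or_lt_of_le hk with rfl | hklt
    · rw [hd, if_neg (by rintro ⟨he, ho⟩; exact (Nat.not_even_iff_odd.mpr ho) he),
        Nat.choose_self]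
      norm_num
    · have hk2 : k ≤ n := by omega
      rw [hrec k (n+1) hk0 hklt]
      simp only [Nat.add_sub_cancel]
      rw [ih (k-1) (by omega), ih k hk2]
      rcases Nat.even_or_odd k with ⟨a, ha⟩ | ⟨a, ha⟩
      · -- k even, k = a + a, a ≥ 1
        obtain ⟨c, rfl⟩ : ∃ c, a = c + 1 := ⟨a - 1, by omega⟩
        have hneg : (-1 : ℤ) ^ k = 1 := Even.neg_one_pow ⟨c + 1, ha⟩
        rcases Nat.even_or_odd n with ⟨b, hb⟩ | ⟨b, hb⟩
        · rw [if_pos ⟨⟨b, hb⟩, ⟨c, by omega⟩⟩,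
            if_neg (by rintro ⟨_, ⟨x, hx⟩⟩; omega),
            if_neg (by rintro ⟨_, ⟨x, hx⟩⟩; omega)]
          have e1 : n / 2 = b := by omega
          have e2 : (n + 1) / 2 = b := by omega
          have e3 : k / 2 = c + 1 := by omega
          rw [e1, e2, e3, hneg]; ring
        · rw [if_neg (by rintro ⟨⟨x, hx⟩, _⟩; omega),
            if_neg (by rintro ⟨⟨x, hx⟩, _⟩; omega),
            if_neg (by rintro ⟨_, ⟨x, hx⟩⟩; omega)]
          have e1 : n / 2 = b := by omega
          have e2 : (n + 1) / 2 = b + 1 := by omega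
          have e3 : k / 2 = c + 1 := by omega
          have e4 : (k - 1) / 2 = c := by omega
          rw [e1, e2, e3, e4, hneg, Nat.choose_succ_succ]
          push_cast; ring
      · -- k odd, k = 2a + 1
        have hneg : (-1 : ℤ) ^ k = -1 := Odd.neg_one_pow ⟨a, ha⟩
        rcases Nat.even_or_odd n with ⟨b, hb⟩ | ⟨b, hb⟩
        · rw [if_neg (by rintro ⟨_, ⟨x, hx⟩⟩; omega),
            if_pos ⟨⟨b, hb⟩, ⟨a, ha⟩⟩,
            if_neg (by rintro ⟨⟨x, hx⟩, _⟩; omega)]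
          have e1 : n / 2 = b := by omega
          have e2 : (n + 1) / 2 = b := by omega
          have e3 : k / 2 = a := by omega
          have e4 : (k - 1) / 2 = a := by omega
          rw [e1, e2, e3, e4, hneg]; ring
        · rw [if_neg (by rintro ⟨⟨x, hx⟩, _⟩; omega),
            if_neg (by rintro ⟨⟨x, hx⟩, _⟩; omega),
            if_pos ⟨⟨b + 1, by omega⟩, ⟨a, ha⟩⟩]
          have e1 : n / 2 = b := by omega
          have e3 : k / 2 = a := by omega
          have e4 : (k - 1) / 2 = a := by omega
          rw [e1, e3, e4, hneg]; ring
end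

section
/- Let P = 𝔸 + b and Q = 𝔹 + c be affine flats in ℝⁿ where 𝔸 and 𝔹 are linear subspaces with orthonormal bases {u₁,…,u_m} and {v₁,…,v_m} respectively, and b ⊥ 𝔸, c ⊥ 𝔹. Then for all x ∈ ℝⁿ, |dist(x, P) - dist(x, Q)| ≤ ‖b - c‖ + 2‖x‖·Σ_{i=1}^m ‖uᵢ - vᵢ‖. -/
open RealInnerProductSpace

lemma aux13 {n m : ℕ} (u : Fin m → EuclideanSpace ℝ (Fin n))
    (hu : Orthonormal ℝ u) (b : EuclideanSpace ℝ (Fin n))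
    (hb : b ∈ (Submodule.span ℝ (Set.range u))ᗮ)
    (x : EuclideanSpace ℝ (Fin n)) :
    Metric.infDist x {y | ∃ a ∈ Submodule.span ℝ (Set.range u), y = a + b}
      = ‖x - b - ∑ i, ⟪x, u i⟫ • u i‖ := by
  set P : EuclideanSpace ℝ (Fin n) := ∑ i, ⟪x, u i⟫ • u i with hP
  have hPmem : P ∈ Submodule.span ℝ (Set.range u) :=
    Submodule.sum_mem _ fun i _ => Submodule.smul_mem _ _
      (Submodule.subset_span (Set.mem_range_self i))
  have hperp : x - b - P ∈ (Submodule.span ℝ (Set.range u))ᗮ := by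
    have hxP : ∀ j, ⟪u j, x - P⟫ = 0 := by
      intro j
      rw [inner_sub_right, hP, hu.inner_right_fintype (fun i => ⟪x, u i⟫) j,
        real_inner_comm, sub_self]
    have h1 : x - P ∈ (Submodule.span ℝ (Set.range u))ᗮ := by
      rw [Submodule.mem_orthogonal]
      intro a ha
      induction ha using Submodule.span_induction with
      | mem y hy => obtain ⟨j, rfl⟩ := hy; exact hxP j
      | zero => simp
      | add _ _ _ _ h1 h2 => rw [inner_add_left, h1, h2, add_zero]
      | smul r _ _ h => rw [inner_smul_left, h, mul_zero]
    have h2 := Submodule.sub_mem _ h1 hb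
    have : x - P - b = x - b - P := by abel
    rwa [this] at h2
  have hne : {y | ∃ a ∈ Submodule.span ℝ (Set.range u), y = a + b}.Nonempty :=
    Set.nonempty_of_mem (Set.mem_setOf.mpr ⟨P, hPmem, rfl⟩)
  apply le_antisymm
  · have h1 : Metric.infDist x {y | ∃ a ∈ Submodule.span ℝ (Set.range u), y = a + b}
        ≤ dist x (P + b) :=
      Metric.infDist_le_dist_of_mem (Set.mem_setOf.mpr ⟨P, hPmem, rfl⟩)
    have h2 : dist x (P + b) = ‖x - b - P‖ := by rw [dist_eq_norm]; congr 1; abel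
    rw [h2] at h1; exact h1
  · rw [Metric.infDist_eq_iInf]
    have : Nonempty {y // y ∈ {y | ∃ a ∈ Submodule.span ℝ (Set.range u), y = a + b}} :=
      hne.to_subtype
    apply le_ciInf
    rintro ⟨y, a, ha, rfl⟩
    have horth : ⟪x - b - P, P - a⟫ = 0 :=
      hperp (P - a) (Submodule.sub_mem _ hPmem ha) |>.symm ▸
        (Submodule.inner_left_of_mem_orthogonal (Submodule.sub_mem _ hPmem ha) hperp)
    have hxy : x - (a + b) = (x - b - P) + (P - a) := by abel
    rw [dist_eq_norm, hxy]
    have hsq := norm_add_sq_eq_norm_sq_add_norm_sq_of_inner_eq_zero _ _ horth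
    nlinarith [norm_nonneg (x - b - P + (P - a)), norm_nonneg (P - a), norm_nonneg (x - b - P)]

theorem stmt_13 {n m : ℕ} (u v : Fin m → EuclideanSpace ℝ (Fin n))
    (hu : Orthonormal ℝ u) (hv : Orthonormal ℝ v)
    (b c : EuclideanSpace ℝ (Fin n))
    (hb : b ∈ (Submodule.span ℝ (Set.range u))ᗮ)
    (hc : c ∈ (Submodule.span ℝ (Set.range v))ᗮ)
    (x : EuclideanSpace ℝ (Fin n)) :
    |Metric.infDist x {y | ∃ a ∈ Submodule.span ℝ (Set.range u), y = a + b} -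
        Metric.infDist x {y | ∃ a ∈ Submodule.span ℝ (Set.range v), y = a + c}| ≤
      ‖b - c‖ + 2 * ‖x‖ * ∑ i, ‖u i - v i‖ := by
  rw [aux13 u hu b hb x, aux13 v hv c hc x]
  set Pu : EuclideanSpace ℝ (Fin n) := ∑ i, ⟪x, u i⟫ • u i with hPu
  set Pv : EuclideanSpace ℝ (Fin n) := ∑ i, ⟪x, v i⟫ • v i with hPv
  have h1 : |‖x - b - Pu‖ - ‖x - c - Pv‖| ≤ ‖(x - b - Pu) - (x - c - Pv)‖ :=
    abs_norm_sub_norm_le _ _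
  have h2 : (x - b - Pu) - (x - c - Pv) = (c - b) + (Pv - Pu) := by abel
  have h3 : ‖(c - b) + (Pv - Pu)‖ ≤ ‖b - c‖ + ‖Pu - Pv‖ := by
    calc ‖(c - b) + (Pv - Pu)‖ ≤ ‖c - b‖ + ‖Pv - Pu‖ := norm_add_le _ _
      _ = ‖b - c‖ + ‖Pu - Pv‖ := by rw [norm_sub_rev, norm_sub_rev Pv]
  have h4 : ‖Pu - Pv‖ ≤ 2 * ‖x‖ * ∑ i, ‖u i - v i‖ := by
    rw [hPu, hPv, ← Finset.sum_sub_distrib]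
    calc ‖∑ i, (⟪x, u i⟫ • u i - ⟪x, v i⟫ • v i)‖
        ≤ ∑ i, ‖⟪x, u i⟫ • u i - ⟪x, v i⟫ • v i‖ := norm_sum_le _ _
      _ ≤ ∑ i, 2 * ‖x‖ * ‖u i - v i‖ := by
          apply Finset.sum_le_sum
          intro i _
          have hdec : ⟪x, u i⟫ • u i - ⟪x, v i⟫ • v i
              = ⟪x, u i⟫ • (u i - v i) + ⟪x, u i - v i⟫ • v i := by
            rw [inner_sub_right]; module
          rw [hdec]
          calc ‖⟪x, u i⟫ • (u i - v i) + ⟪x, u i - v i⟫ • v i‖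
              ≤ ‖⟪x, u i⟫ • (u i - v i)‖ + ‖⟪x, u i - v i⟫ • v i‖ := norm_add_le _ _
            _ = |⟪x, u i⟫| * ‖u i - v i‖ + |⟪x, u i - v i⟫| * ‖v i‖ := by
                rw [norm_smul, norm_smul, Real.norm_eq_abs, Real.norm_eq_abs]
            _ ≤ ‖x‖ * ‖u i‖ * ‖u i - v i‖ + ‖x‖ * ‖u i - v i‖ * ‖v i‖ := by
                gcongr
                · exact abs_real_inner_le_norm _ _
                · exact abs_real_inner_le_norm _ _
            _ = 2 * ‖x‖ * ‖u i - v i‖ := by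
                rw [hu.1 i, hv.1 i]; ring
      _ = 2 * ‖x‖ * ∑ i, ‖u i - v i‖ := by rw [Finset.mul_sum]
  calc |‖x - b - Pu‖ - ‖x - c - Pv‖| ≤ ‖(c - b) + (Pv - Pu)‖ := h2 ▸ h1
    _ ≤ ‖b - c‖ + ‖Pu - Pv‖ := h3
    _ ≤ ‖b - c‖ + 2 * ‖x‖ * ∑ i, ‖u i - v i‖ := by linarith
end

section
/- In ℝ², let ℓ_r denote the horizontal line y = r, and let X = {0} be the origin. The principal angle between the embedded subspaces j(ℓ_0) and j(ℓ_r) in Gr(2,3) satisfies cos θ(ℓ_0, ℓ_r) = 1/√(1+r²), so θ(ℓ_0, ℓ_r) = arccos((1+r²)^{-1/2}) → π/2 as r → ∞, while ‖f_{ℓ_0} - f_{ℓ_r}‖_∞ = |r| on X. In particular, the distance-to-line PHT is not Lipschitz continuous as a map from the affine Grassmannian metric. -/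
open RealInnerProductSpace

theorem stmt_15 (r : ℝ) (a br : EuclideanSpace ℝ (Fin 3))
    (ha : a = (WithLp.equiv 2 (Fin 3 → ℝ)).symm ![0, 0, 1])
    (hbr : br = (Real.sqrt (1 + r ^ 2))⁻¹ • (WithLp.equiv 2 (Fin 3 → ℝ)).symm ![0, r, 1]) :
    ⟪a, br⟫ = 1 / Real.sqrt (1 + r ^ 2) ∧
      Filter.Tendsto (fun s : ℝ => Real.arccos (1 / Real.sqrt (1 + s ^ 2)))
        Filter.atTop (nhds (Real.pi / 2)) ∧
      |Metric.infDist (0 : EuclideanSpace ℝ (Fin 2)) {p | p 1 = 0} -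
          Metric.infDist (0 : EuclideanSpace ℝ (Fin 2)) {p | p 1 = r}| = |r| := by
  refine ⟨?_, ?_, ?_⟩
  · subst ha hbr
    rw [PiLp.inner_apply, Fin.sum_univ_three]
    simp only [PiLp.smul_apply, WithLp.equiv_symm_apply, PiLp.toLp_apply, WithLp.ofLp_toLp, Matrix.cons_val_zero,
      Matrix.cons_val_one, Matrix.head_cons, Matrix.cons_val_two, Matrix.tail_cons,
      smul_eq_mul, RCLike.inner_apply, conj_trivial, one_div]
    ring
  · have hs : Filter.Tendsto (fun s : ℝ => Real.sqrt (1 + s ^ 2))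
        Filter.atTop Filter.atTop := by
      apply Filter.tendsto_atTop_mono (fun s => ?_) Filter.tendsto_id
      calc (s : ℝ) ≤ |s| := le_abs_self s
        _ = Real.sqrt (s ^ 2) := (Real.sqrt_sq_eq_abs s).symm
        _ ≤ Real.sqrt (1 + s ^ 2) := Real.sqrt_le_sqrt (by linarith)
    have h0 : Filter.Tendsto (fun s : ℝ => 1 / Real.sqrt (1 + s ^ 2))
        Filter.atTop (nhds 0) := Filter.Tendsto.div_atTop tendsto_const_nhds hs
    have := (Real.continuous_arccos.continuousAt (x := 0)).tendsto.comp h0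
    simpa [Real.arccos_zero, Function.comp_def] using this
  · have h1 : Metric.infDist (0 : EuclideanSpace ℝ (Fin 2)) {p | p 1 = 0} = 0 := by
      apply Metric.infDist_zero_of_mem
      simp [Set.mem_setOf_eq]
    have hmem : ((WithLp.equiv 2 (Fin 2 → ℝ)).symm ![0, r]) ∈
        {p : EuclideanSpace ℝ (Fin 2) | p 1 = r} := by simp [Set.mem_setOf_eq]
    have hge : ∀ p ∈ {p : EuclideanSpace ℝ (Fin 2) | p 1 = r},
        |r| ≤ dist (0 : EuclideanSpace ℝ (Fin 2)) p := by
      intro p hp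
      rw [EuclideanSpace.dist_eq]
      have hp1 : p 1 = r := hp
      rw [show |r| = Real.sqrt (r ^ 2) from (Real.sqrt_sq_eq_abs r).symm]
      apply Real.sqrt_le_sqrt
      rw [Fin.sum_univ_two, hp1]
      have e0 : (0 : EuclideanSpace ℝ (Fin 2)) 0 = 0 := rfl
      have e1 : (0 : EuclideanSpace ℝ (Fin 2)) 1 = 0 := rfl
      rw [e0, e1]
      simp only [Real.dist_eq]
      nlinarith [sq_abs (0 - p 0), sq_abs (0 - r), sq_nonneg (p 0)]
    have h2 : Metric.infDist (0 : EuclideanSpace ℝ (Fin 2)) {p | p 1 = r} = |r| := by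
      apply le_antisymm
      · calc Metric.infDist (0 : EuclideanSpace ℝ (Fin 2)) {p | p 1 = r}
            ≤ dist (0 : EuclideanSpace ℝ (Fin 2))
              ((WithLp.equiv 2 (Fin 2 → ℝ)).symm ![0, r]) := Metric.infDist_le_dist_of_mem hmem
          _ = |r| := by
            rw [EuclideanSpace.dist_eq, Fin.sum_univ_two]
            simp [WithLp.equiv_symm_apply, Real.sqrt_sq_eq_abs]
      · by_contra h
        push_neg at h
        obtain ⟨y, hy, hlt⟩ := (Metric.infDist_lt_iff ⟨_, hmem⟩).mp h
        exact absurd hlt (not_lt.mpr (hge y hy))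
    rw [h1, h2]
    simp
end
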